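/- There exist an absolute constant C > 0 and an absolute constant D such that for every integer d ≥ D: Σ_{⌈d^(0.99)⌉ ≤ k ≤ ⌊d^(1.01)⌋} N(d,k) · ν_d(k) ≤ C · d^(−0.455), where the sum is over all integers k with d^(0.99) ≤ k ≤ d^(1.01). -/

import Mathlib

open Real Filter

/-- Distinct eigenvalues (up to constants) of the NTK on the sphere `S^d`:
`ν_d(k) = d^d · k^(k−2) · (k+d)^(−(k+d+1)) · (k² + k·d + d)`. -/
noncomputable def nuNT (d k : ℕ) : ℝ :=
  (d : ℝ) ^ (d : ℝ) * (k : ℝ) ^ ((k : ℝ) - 2) *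
    ((k : ℝ) + (d : ℝ)) ^ (-((k : ℝ) + (d : ℝ) + 1)) *
    ((k : ℝ) ^ 2 + (k : ℝ) * (d : ℝ) + (d : ℝ))

/-- Dimension of the space of spherical harmonics of degree `k` on `S^d ⊆ ℝ^(d+1)`. -/
def Nsph (d k : ℕ) : ℕ :=
  if k = 0 then 1
  else (k + d).choose k - (if 2 ≤ k then (k + d - 2).choose (k - 2) else 0)

/-- `λ_d(0) = 1` and `λ_d(k) = ν_d(k)` for `k ≥ 1`. -/
noncomputable def lamNT (d k : ℕ) : ℝ := if k = 0 then 1 else nuNT d k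

/-!
Two-sided Stirling bounds give `binom(k+d, k) ≲ √(1/k + 1/d) · (k+d)^(k+d) / (k^k d^d)`, and the
exponential factors cancel exactly against those of `ν_d(k)`, leaving
`N(d,k) ν_d(k) ≤ √(1/k + 1/d) / k`. On the window `d^0.99 ≤ k ≤ d^1.01` each term is therefore
`O(d^(-1.485))`, and there are at most `d^1.01` terms, so the sum is `O(d^(-0.475))`.
-/

open Nat in
theorem Stirling.factorial_le_exp_one_mul_sqrt {n : ℕ} (hn : n ≠ 0) :
    (n ! : ℝ) ≤ exp 1 * √n * (n / exp 1) ^ n := by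
  obtain ⟨m, rfl⟩ := Nat.exists_eq_succ_of_ne_zero hn
  have hseq : stirlingSeq (m + 1) ≤ exp 1 / √2 := by
    simpa [stirlingSeq_one] using stirlingSeq'_antitone (Nat.zero_le m)
  have hfac : ((m + 1) ! : ℝ) =
      stirlingSeq (m + 1) * (√2 * √(m + 1 : ℕ) * ((m + 1 : ℕ) / exp 1) ^ (m + 1)) := by
    rw [stirlingSeq, ← Real.sqrt_mul zero_le_two, div_mul_cancel₀ _ (by positivity)]
  rw [hfac]
  calc _ ≤ exp 1 / √2 * (√2 * √(m + 1 : ℕ) * ((m + 1 : ℕ) / exp 1) ^ (m + 1)) := by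
        gcongr
    _ = _ := by field_simp

open Nat in
theorem Nat.cast_add_choose_le {m n : ℕ} (hm : m ≠ 0) (hn : n ≠ 0) :
    ((m + n).choose m : ℝ) ≤
      exp 1 / (2 * π) * √(1 / m + 1 / n) * ((m + n : ℝ) ^ (m + n) / (m ^ m * n ^ n)) := by
  have hm' : (0 : ℝ) < m := by positivity
  have hn' : (0 : ℝ) < n := by positivity
  rw [Nat.cast_add_choose]
  calc ((m + n)! : ℝ) / (m ! * n !)
      ≤ exp 1 * √(m + n : ℕ) * ((m + n : ℕ) / exp 1) ^ (m + n) /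
          (√(2 * π * m) * (m / exp 1) ^ m * (√(2 * π * n) * (n / exp 1) ^ n)) := by
        gcongr
        · exact Stirling.factorial_le_exp_one_mul_sqrt (by omega)
        · exact Stirling.le_factorial_stirling m
        · exact Stirling.le_factorial_stirling n
    _ = _ := by
        have hsq : √(1 / m + 1 / n) = √(m + n : ℕ) / (√m * √n) := by
          rw [← Real.sqrt_mul hm'.le, ← Real.sqrt_div (by positivity)]
          congr 1; push_cast; field_simp; ring
        rw [hsq, Real.sqrt_mul (by positivity) (m : ℝ), Real.sqrt_mul (by positivity) (n : ℝ),
          div_pow, div_pow, div_pow, pow_add]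
        push_cast
        field_simp
        rw [Real.sq_sqrt (by positivity)]
        ring

theorem Nsph_le_choose (d k : ℕ) : Nsph d k ≤ (k + d).choose k := by
  unfold Nsph
  split_ifs with hk
  · simp [hk]
  all_goals exact Nat.sub_le _ _

theorem nuNT_eq_pow_div {d k : ℕ} (hk : k ≠ 0) :
    nuNT d k = (d : ℝ) ^ d * (k : ℝ) ^ k / ((k + d : ℝ) ^ (k + d)) *
      ((k ^ 2 + k * d + d) / (k ^ 2 * (k + d))) := by
  have hk' : (0 : ℝ) < k := by positivity
  have hkd : (0 : ℝ) < k + d := by positivity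
  have hcast : ((k : ℝ) + d) = ((k + d : ℕ) : ℝ) := by push_cast; ring
  unfold nuNT
  rw [Real.rpow_sub hk', Real.rpow_neg hkd.le, Real.rpow_add hkd, Real.rpow_one,
    Real.rpow_natCast, Real.rpow_natCast, Real.rpow_two, hcast, Real.rpow_natCast, ← hcast]
  field_simp

theorem Nsph_mul_nuNT_le {d k : ℕ} (hd : d ≠ 0) (hk : k ≠ 0) :
    (Nsph d k : ℝ) * nuNT d k ≤ √(1 / k + 1 / d) / k := by
  have hk' : (0 : ℝ) < k := by positivity
  have hd' : (0 : ℝ) < d := by positivity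
  have hnu : 0 ≤ nuNT d k := by rw [nuNT_eq_pow_div hk]; positivity
  have hratio : ((k : ℝ) ^ 2 + k * d + d) / (k ^ 2 * (k + d)) ≤ 2 / k := by
    rw [div_le_div_iff₀ (by positivity) hk']
    have hk1 : (1 : ℝ) ≤ k := by exact_mod_cast Nat.one_le_iff_ne_zero.2 hk
    nlinarith [mul_le_mul_of_nonneg_right hk1 hd'.le]
  have hconst : exp 1 / (2 * π) * 2 ≤ 1 := by
    rw [div_mul_eq_mul_div, div_le_one (by positivity)]
    linarith [Real.exp_one_lt_d9, Real.pi_gt_three]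
  calc (Nsph d k : ℝ) * nuNT d k ≤ ((k + d).choose k : ℝ) * nuNT d k := by
        gcongr; exact_mod_cast Nsph_le_choose d k
    _ ≤ exp 1 / (2 * π) * √(1 / k + 1 / d) * ((k + d : ℝ) ^ (k + d) / (k ^ k * d ^ d)) *
          nuNT d k := by
        gcongr; exact_mod_cast Nat.cast_add_choose_le hk hd
    _ = exp 1 / (2 * π) * √(1 / k + 1 / d) *
          (((k : ℝ) ^ 2 + k * d + d) / (k ^ 2 * (k + d))) := by
        rw [nuNT_eq_pow_div hk]; field_simp
    _ ≤ exp 1 / (2 * π) * √(1 / k + 1 / d) * (2 / k) := by gcongr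
    _ = exp 1 / (2 * π) * 2 * (√(1 / k + 1 / d) / k) := by ring
    _ ≤ √(1 / k + 1 / d) / k := mul_le_of_le_one_left (by positivity) hconst

theorem sum_Icc_Nsph_mul_nuNT_le {d K L : ℕ} (hK : K ≠ 0) (hKd : K ≤ d) :
    ∑ k ∈ Finset.Icc K L, (Nsph d k : ℝ) * nuNT d k ≤
      L * (√2 * (K : ℝ) ^ (-(3 / 2) : ℝ)) := by
  have hK' : (0 : ℝ) < K := by positivity
  have hterm : ∀ k ∈ Finset.Icc K L,
      (Nsph d k : ℝ) * nuNT d k ≤ √2 * (K : ℝ) ^ (-(3 / 2) : ℝ) := by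
    intro k hk
    have hKk : K ≤ k := (Finset.mem_Icc.1 hk).1
    have hKd' : (K : ℝ) ≤ d := by exact_mod_cast hKd
    calc (Nsph d k : ℝ) * nuNT d k ≤ √(1 / k + 1 / d) / k :=
          Nsph_mul_nuNT_le (by omega) (by omega)
      _ ≤ √(1 / K + 1 / K) / K := by gcongr
      _ = √2 * (K : ℝ) ^ (-(3 / 2) : ℝ) := by
        rw [show (-(3 / 2) : ℝ) = -1 - 1 / 2 by norm_num, Real.rpow_sub hK', Real.rpow_neg_one,
          ← Real.sqrt_eq_rpow, ← add_div, Real.sqrt_div' _ hK'.le]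
        field_simp
        norm_num
  have hcard : ((Finset.Icc K L).card : ℝ) ≤ L := by
    rw [Nat.card_Icc]; exact_mod_cast (by omega : L + 1 - K ≤ L)
  calc ∑ k ∈ Finset.Icc K L, (Nsph d k : ℝ) * nuNT d k
      ≤ (Finset.Icc K L).card * (√2 * (K : ℝ) ^ (-(3 / 2) : ℝ)) := by
        simpa using Finset.sum_le_card_nsmul _ _ _ hterm
    _ ≤ L * (√2 * (K : ℝ) ^ (-(3 / 2) : ℝ)) := by gcongr

/-- An absolute constant C > 0 and D such that for all d ≥ D, the sum over all integers k
with d^0.99 ≤ k ≤ d^1.01 of N(d,k)·ν_d(k) is at most C·d^(−0.455). -/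
theorem middle_sum_Nsph_mul_nuNT_le :
    ∃ C : ℝ, 0 < C ∧ ∃ D : ℕ, ∀ d : ℕ, D ≤ d →
      ∑ k ∈ Finset.Icc ⌈(d : ℝ) ^ (0.99 : ℝ)⌉₊ ⌊(d : ℝ) ^ (1.01 : ℝ)⌋₊,
          (Nsph d k : ℝ) * nuNT d k ≤
        C * (d : ℝ) ^ (-(0.455 : ℝ)) := by
  refine ⟨√2, by positivity, 1, fun d hd => ?_⟩
  have hd1 : (1 : ℝ) ≤ d := by exact_mod_cast hd
  have hd0 : (0 : ℝ) < d := by positivity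
  set K := ⌈(d : ℝ) ^ (0.99 : ℝ)⌉₊
  set L := ⌊(d : ℝ) ^ (1.01 : ℝ)⌋₊
  have hK : K ≠ 0 := (Nat.ceil_pos.2 (by positivity)).ne'
  have hKd : K ≤ d := Nat.ceil_le.2 <| by
    simpa using Real.rpow_le_rpow_of_exponent_le hd1 (show (0.99 : ℝ) ≤ 1 by norm_num)
  have hL : (L : ℝ) ≤ d ^ (1.01 : ℝ) := Nat.floor_le (by positivity)
  have hKpow : (K : ℝ) ^ (-(3 / 2) : ℝ) ≤ d ^ (-1.485 : ℝ) := by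
    calc (K : ℝ) ^ (-(3 / 2) : ℝ) ≤ ((d : ℝ) ^ (0.99 : ℝ)) ^ (-(3 / 2) : ℝ) :=
          Real.rpow_le_rpow_of_nonpos (by positivity) (Nat.le_ceil _) (by norm_num)
      _ = d ^ (-1.485 : ℝ) := by rw [← Real.rpow_mul hd0.le]; norm_num
  calc _ ≤ L * (√2 * (K : ℝ) ^ (-(3 / 2) : ℝ)) := sum_Icc_Nsph_mul_nuNT_le hK hKd
    _ ≤ d ^ (1.01 : ℝ) * (√2 * d ^ (-1.485 : ℝ)) := by gcongr
    _ = √2 * d ^ (-(0.475 : ℝ)) := by rw [mul_left_comm, ← Real.rpow_add hd0]; norm_num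
    _ ≤ √2 * d ^ (-(0.455 : ℝ)) := by gcongr; norm_num
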